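/- arXiv:2312.08686 — 4 statements merged into one kernel-verified Lean document; each statement's English description precedes it below -/
import Mathlib

section
/- Let (X,τ) be a topological space. Then X is a continuous open image of some topological space possessing a Lusin π-base if and only if X has an α-scheme and the cardinality of X is at most the cardinality of the continuum 𝔠. -/
open Set Topology

universe u v

/-- The restriction `p↾n` of `p : ℕ → ℕ`, as a finite sequence in `ω^{<ω}`. -/
def pre (p : ℕ → ℕ) (n : ℕ) : List ℕ := List.ofFn fun i : Fin n => p i

/-- `a ⊑ p` : the finite sequence `a` is an initial segment of the branch `p`. -/
def IsPre (a : List ℕ) (p : ℕ → ℕ) : Prop := a = pre p a.length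

/-- `S_a = {p ∈ ω^ω : a ⊑ p}`, the pieces of the standard Lusin scheme. -/
def stdS (a : List ℕ) : Set (ℕ → ℕ) := {p | IsPre a p}

section scheme

variable {X Y : Type*}

/-- `fruit_p(V) = ⋂_n V_{p↾n}`. -/
def fruit (V : List ℕ → Set X) (p : ℕ → ℕ) : Set X := ⋂ n, V (pre p n)

/-- `flesh(V) = ⋃_a V_a`. -/
def flesh (V : List ℕ → Set X) : Set X := ⋃ a, V a

/-- The Souslin scheme `V` covers the set `A`. -/
def Covers (V : List ℕ → Set X) (A : Set X) : Prop :=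
  V [] = A ∧ ∀ a, V a = ⋃ n, V (a ++ [n])

/-- The Souslin scheme `V` partitions the set `A`. -/
def Partitions (V : List ℕ → Set X) (A : Set X) : Prop :=
  Covers V A ∧ ∀ a, ∀ n m : ℕ, n ≠ m → V (a ++ [n]) ∩ V (a ++ [m]) = ∅

/-- `V` is complete: every fruit is nonempty. -/
def CompleteScheme (V : List ℕ → Set X) : Prop := ∀ q : ℕ → ℕ, (fruit V q).Nonempty

/-- `V` has strict branches: every fruit is a singleton. -/
def StrictBranches (V : List ℕ → Set X) : Prop := ∀ q : ℕ → ℕ, ∃ x, fruit V q = {x}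

/-- `V` is regular: `V_{a⌢n} ⊆ V_a`. -/
def RegularScheme (V : List ℕ → Set X) : Prop := ∀ a n, V (a ++ [n]) ⊆ V a

/-- `V` has nonempty leaves. -/
def NonemptyLeaves (V : List ℕ → Set X) : Prop := ∀ a, (V a).Nonempty

/-- `V` is an open Souslin scheme with respect to the topology `t`. -/
def OpenScheme (t : TopologicalSpace X) (V : List ℕ → Set X) : Prop := ∀ a, t.IsOpen (V a)

/-- `V` is semi-open with respect to the topology `t`: `V_a ⊆ Cl_t(Int_t(V_a))`. -/
def SemiOpenScheme (t : TopologicalSpace X) (V : List ℕ → Set X) : Prop :=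
  ∀ a, V a ⊆ @closure _ t (@interior _ t (V a))

/-- `Ṽ^k_b = ⋃_{j ≥ k} V_{b⌢j}`. -/
def shootSet (V : List ℕ → Set X) (b : List ℕ) (k : ℕ) : Set X :=
  ⋃ j, ⋃ (_ : k ≤ j), V (b ++ [j])

/-- `shoot_b(V) = {Ṽ^k_b : k ∈ ω}`. -/
def shoot (V : List ℕ → Set X) (b : List ℕ) : Set (Set X) := {G | ∃ k, G = shootSet V b k}

/-- `γ → U`: some member of the family `γ` is contained in `U`. -/
def Engulfs (γ : Set (Set X)) (U : Set X) : Prop := ∃ G ∈ γ, G ⊆ U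

/-- `p →_V U`: there is an infinite `L ⊆ ω` with `shoot_{p↾n}(V) → U` for all `n ∈ L`. -/
def ArrowSeq (V : List ℕ → Set X) (p : ℕ → ℕ) (U : Set X) : Prop :=
  ∃ L : Set ℕ, L.Infinite ∧ ∀ n ∈ L, Engulfs (shoot V (pre p n)) U

/-- `p →_{V,t} x`: `p →_V U` for every `t`-open `U` containing `x`. -/
def ArrowPt (t : TopologicalSpace X) (V : List ℕ → Set X) (p : ℕ → ℕ) (x : X) : Prop :=
  ∀ U : Set X, t.IsOpen U → x ∈ U → ArrowSeq V p U

/-- `V` is a Lusin π-base for `(X, t)`. -/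
def LusinPiBase (t : TopologicalSpace X) (V : List ℕ → Set X) : Prop :=
  OpenScheme t V ∧ Partitions V Set.univ ∧ StrictBranches V ∧
    ∀ x : X, ∀ U : Set X, t.IsOpen U → x ∈ U →
      ∃ a : List ℕ, ∃ n : ℕ, x ∈ V a ∧ shootSet V a n ⊆ U

/-- `V` is an α-scheme for `(X, t)`. -/
def AlphaScheme (t : TopologicalSpace X) (V : List ℕ → Set X) : Prop :=
  OpenScheme t V ∧ CompleteScheme V ∧ Covers V Set.univ ∧
    (∀ a : List ℕ, ∀ x ∈ V a, ∃ p : ℕ → ℕ, IsPre a p ∧ x ∈ fruit V p ∧ ArrowPt t V p x) ∧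
    (∀ p : ℕ → ℕ, ∃ x ∈ fruit V p, ArrowPt t V p x)

/-- `V` is a ramose α-scheme for `(X, t)`. -/
def RamoseAlphaScheme (t : TopologicalSpace X) (V : List ℕ → Set X) : Prop :=
  AlphaScheme t V ∧ ∀ a : List ℕ, ∀ x ∈ V a,
    Cardinal.mk {p : ℕ → ℕ // IsPre a p ∧ x ∈ fruit V p ∧ ArrowPt t V p x} = Cardinal.continuum

/-- `γ` is a π-base for `(X, t)`. -/
def PiBase (t : TopologicalSpace X) (γ : Set (Set X)) : Prop :=
  (∀ G ∈ γ, G.Nonempty ∧ t.IsOpen G) ∧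
    ∀ U : Set X, t.IsOpen U → U.Nonempty → ∃ G ∈ γ, G ⊆ U

/-- `γ` is a π-net for the subspace `A` of `(X, t)`. -/
def PiNetFor (t : TopologicalSpace X) (γ : Set (Set X)) (A : Set X) : Prop :=
  (∀ G ∈ γ, G.Nonempty) ∧
    ∀ U : Set X, t.IsOpen U → (U ∩ A).Nonempty → ∃ G ∈ γ, G ⊆ U ∩ A

/-- `V` is a π-base Souslin scheme on `(X, t)`:
an open scheme such that `{V_b : a ⊑ b}` is a π-net for the subspace `V_a`, for each `a`. -/
def PiBaseScheme (t : TopologicalSpace X) (V : List ℕ → Set X) : Prop :=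
  OpenScheme t V ∧ ∀ a, PiNetFor t {S | ∃ b, a <+: b ∧ S = V b} (V a)

/-- `(X, t)` is a π-space. -/
def PiSpace (t : TopologicalSpace X) : Prop :=
  ∃ V : List ℕ → Set X, OpenScheme t V ∧ Partitions V Set.univ ∧ StrictBranches V ∧
    PiBase t {S | ∃ a, S = V a}

/-- `(X, t)` is zero-dimensional: it has a base consisting of clopen sets. -/
def ZeroDimT (t : TopologicalSpace X) : Prop :=
  ∀ U : Set X, t.IsOpen U → ∀ x ∈ U, ∃ C : Set X, t.IsOpen C ∧ @IsClosed _ t C ∧ x ∈ C ∧ C ⊆ U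

/-- `branches_V(x) = {q ∈ ω^ω : x ∈ fruit_q(V)}`. -/
def branches (V : List ℕ → Set X) (x : X) : Set (ℕ → ℕ) := {q | x ∈ fruit V q}

/-- `f` is a selector on `V`: a surjection of `ω^ω` onto `flesh(V)` such that each fiber
`f⁻¹(x)` is a dense subset of the subspace `branches_V(x)` of the Baire space. -/
def IsSelector (V : List ℕ → Set X) (f : (ℕ → ℕ) → X) : Prop :=
  (∀ p, f p ∈ flesh V) ∧ (∀ x ∈ flesh V, ∃ p, f p = x) ∧
    ∀ x ∈ flesh V, f ⁻¹' {x} ⊆ branches V x ∧ branches V x ⊆ closure (f ⁻¹' {x})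

/-- The topology `σ_{t,f}` on `ω^ω` generated by the subbase
`{f⁻¹[U] : U ∈ t} ∪ {S_a : a ∈ ω^{<ω}}`. -/
def sigmaTop (t : TopologicalSpace X) (f : (ℕ → ℕ) → X) : TopologicalSpace (ℕ → ℕ) :=
  TopologicalSpace.generateFrom
    ({S | ∃ U : Set X, t.IsOpen U ∧ S = f ⁻¹' U} ∪ {S | ∃ a : List ℕ, S = stdS a})

end scheme

/-- `(ω^ω, t)` is a standard π-space: the family `τ_N \ {∅}` of nonempty open sets of the
Baire space is a π-base for `(ω^ω, t)`. -/
def StandardPiSpace (t : TopologicalSpace (ℕ → ℕ)) : Prop :=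
  (∀ U : Set (ℕ → ℕ), IsOpen U → U.Nonempty → t.IsOpen U) ∧
    ∀ U : Set (ℕ → ℕ), t.IsOpen U → U.Nonempty → ∃ G : Set (ℕ → ℕ), IsOpen G ∧ G.Nonempty ∧ G ⊆ U

/-!
In a Lusin π-base every branch `p` is followed, for every neighbourhood of its point, by
shoots inside that neighbourhood at infinitely many levels: `L6` provides a shoot at some node
containing the point, and the node lies on `p` below any prescribed level because the pieces
partition the space and are nonempty. This passes to continuous images, so the images of the
pieces under a continuous open surjection form an α-scheme; and the branches parametrize the
space, which gives `|X| ≤ 𝔠`.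

Conversely, fix an injection `ι : X → ω^ω` and read `p ∈ ω^ω` as its even part, a branch of
the α-scheme `V`, and its odd part, a tag. Send `p` to the point `x` its tag eventually spells
(via the codes of the prefixes of `ι x`) whenever the even part is a branch converging to `x`,
and to some limit of the even part otherwise. Giving `ω^ω` the coarsest topology that makes
this map and the identity to the Baire space continuous, the standard cylinders form a Lusin
π-base, and since a tag can be appended to any finite prefix, every basic neighbourhood is
mapped onto a neighbourhood, so the map is open.
-/

open Filter PiNat

@[simp] lemma length_pre (p : ℕ → ℕ) (n : ℕ) : (pre p n).length = n := List.length_ofFn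

lemma pre_succ (p : ℕ → ℕ) (n : ℕ) : pre p (n + 1) = pre p n ++ [p n] := by
  rw [pre, List.ofFn_succ']
  simp [pre]

lemma pre_eq_pre_iff {p q : ℕ → ℕ} {n : ℕ} : pre p n = pre q n ↔ p ∈ cylinder q n := by
  simp [pre, List.ofFn_inj, funext_iff, mem_cylinder_iff, Fin.forall_iff]

lemma isPre_pre (p : ℕ → ℕ) (n : ℕ) : IsPre (pre p n) p := by
  simp [IsPre]

lemma isPre_iff {a : List ℕ} {p : ℕ → ℕ} : IsPre a p ↔ ∀ i (hi : i < a.length), a[i] = p i := by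
  simp [IsPre, List.ext_getElem_iff, pre]

lemma isPre_append_singleton_iff {a : List ℕ} {n : ℕ} {p : ℕ → ℕ} :
    IsPre (a ++ [n]) p ↔ IsPre a p ∧ p a.length = n := by
  rw [IsPre, IsPre, List.length_append, List.length_singleton, pre_succ]
  simp [eq_comm (a := n)]

lemma isPre_iff_mem_cylinder {a : List ℕ} {p q : ℕ → ℕ} (hq : IsPre a q) :
    IsPre a p ↔ p ∈ cylinder q a.length := by
  rw [← pre_eq_pre_iff, IsPre, ← hq, eq_comm]

lemma isPre_pre_iff {p q : ℕ → ℕ} {n : ℕ} : IsPre (pre q n) p ↔ p ∈ cylinder q n := by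
  simpa using isPre_iff_mem_cylinder (isPre_pre q n)

lemma exists_isPre (a : List ℕ) : ∃ p, IsPre a p :=
  ⟨fun i => a.getD i 0, isPre_iff.2 fun i hi => by simp [hi]⟩

lemma eq_of_forall_pre_eq {p q : ℕ → ℕ} (h : ∀ n, pre p n = pre q n) : p = q :=
  funext fun i => mem_cylinder_iff.1 (pre_eq_pre_iff.1 (h (i + 1))) i i.lt_succ_self

lemma exists_isPre_forall_pre {P : List ℕ → Prop} {a : List ℕ} (ha : P a)
    (hP : ∀ b, P b → ∃ n, P (b ++ [n])) : ∃ q, IsPre a q ∧ ∀ k, P (pre q (a.length + k)) := by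
  choose! next hnext using hP
  let L : ℕ → List ℕ := fun k => Nat.rec a (fun _ b => b ++ [next b]) k
  let q : ℕ → ℕ := fun i => if h : i < a.length then a[i] else next (L (i - a.length))
  have hq : IsPre a q := isPre_iff.2 fun i hi => by simp [q, hi]
  have hLq : ∀ k, pre q (a.length + k) = L k := by
    intro k
    induction k with
    | zero => exact hq.symm
    | succ k ih => simp [← add_assoc, pre_succ, ih, q, L]
  have hL : ∀ k, P (L k) := fun k => Nat.rec ha (fun k ih => hnext _ ih) k
  exact ⟨q, hq, fun k => hLq k ▸ hL k⟩

section branches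

variable {X Y : Type*}

lemma fruit_subset_of_isPre (V : List ℕ → Set X) {a : List ℕ} {p : ℕ → ℕ} (h : IsPre a p) :
    fruit V p ⊆ V a := by
  rw [h]
  exact iInter_subset _ _

lemma image_fruit_subset (f : Y → X) (W : List ℕ → Set Y) (p : ℕ → ℕ) :
    f '' fruit W p ⊆ fruit (fun a => f '' W a) p :=
  image_iInter_subset _ _

lemma shootSet_image (f : Y → X) (W : List ℕ → Set Y) (b : List ℕ) (k : ℕ) :
    shootSet (fun a => f '' W a) b k = f '' shootSet W b k := by
  simp only [shootSet, image_iUnion]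

lemma Covers.append_subset {V : List ℕ → Set X} {A : Set X} (hV : Covers V A) (a : List ℕ)
    (n : ℕ) : V (a ++ [n]) ⊆ V a :=
  (hV.2 a).symm ▸ subset_iUnion (fun m => V (a ++ [m])) n

lemma Covers.antitone_pre {V : List ℕ → Set X} {A : Set X} (hV : Covers V A) (p : ℕ → ℕ) :
    Antitone fun n => V (pre p n) :=
  antitone_nat_of_succ_le fun n => by
    simpa only [pre_succ] using hV.append_subset (pre p n) (p n)

lemma Covers.exists_mem_fruit {V : List ℕ → Set X} {A : Set X} (hV : Covers V A) {a : List ℕ}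
    {x : X} (hx : x ∈ V a) : ∃ q, IsPre a q ∧ x ∈ fruit V q := by
  have hnext : ∀ b, x ∈ V b → ∃ n, x ∈ V (b ++ [n]) := fun b hb => mem_iUnion.1 (hV.2 b ▸ hb)
  obtain ⟨q, ha, hq⟩ := exists_isPre_forall_pre hx hnext
  exact ⟨q, ha, mem_iInter.2 fun n => hV.antitone_pre q (Nat.le_add_left n a.length) (hq n)⟩

lemma Partitions.isPre_of_mem {V : List ℕ → Set X} {A : Set X} (hV : Partitions V A)
    {x : X} {p : ℕ → ℕ} (hx : x ∈ fruit V p) {a : List ℕ} (ha : x ∈ V a) : IsPre a p := by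
  induction a using List.reverseRecOn with
  | nil => rfl
  | append_singleton b n ih =>
    have hb : IsPre b p := ih (hV.1.append_subset b n ha)
    refine isPre_append_singleton_iff.2 ⟨hb, by_contra fun hne => ?_⟩
    have hx' : x ∈ V (b ++ [p b.length]) := by
      rw [hb, length_pre, ← pre_succ]
      exact mem_iInter.1 hx _
    exact (hV.2 b n _ (Ne.symm hne)).subset ⟨ha, hx'⟩

lemma StrictBranches.nonempty {V : List ℕ → Set X} (hV : StrictBranches V) (a : List ℕ) :
    (V a).Nonempty := by
  obtain ⟨p, hp⟩ := exists_isPre a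
  obtain ⟨x, hx⟩ := hV p
  exact ⟨x, fruit_subset_of_isPre V hp (hx ▸ rfl)⟩

lemma StrictBranches.mk_le_continuum {V : List ℕ → Set X} (hS : StrictBranches V)
    (hV : Covers V univ) : Cardinal.mk X ≤ Cardinal.continuum := by
  choose point hpoint using hS
  have hsurj : Function.Surjective point := fun x => by
    obtain ⟨q, -, hq⟩ := hV.exists_mem_fruit (hV.1.symm ▸ mem_univ x)
    exact ⟨q, ((hpoint q).subset hq).symm⟩
  simpa using Cardinal.lift_mk_le_lift_mk_of_surjective hsurj

end branches

section forward

variable {X Y : Type*}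

lemma LusinPiBase.arrowPt {t : TopologicalSpace X} {W : List ℕ → Set X} (hL : LusinPiBase t W)
    {x : X} {p : ℕ → ℕ} (hx : x ∈ fruit W p) : ArrowPt t W p x := by
  obtain ⟨hopen, hP, hS, hL6⟩ := hL
  intro O hO hxO
  refine ⟨{m | Engulfs (shoot W (pre p m)) O}, infinite_of_forall_exists_gt fun r => ?_,
    fun m hm => hm⟩
  obtain ⟨a, k, hxa, hsub⟩ :=
    hL6 x (O ∩ W (pre p (r + 1))) (t.isOpen_inter _ _ hO (hopen _)) ⟨hxO, mem_iInter.1 hx _⟩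
  have ha : IsPre a p := hP.isPre_of_mem hx hxa
  refine ⟨a.length, ⟨shootSet W a k, ⟨k, by rw [← ha]⟩, hsub.trans inter_subset_left⟩, ?_⟩
  -- else the shoot at `a` lies in `W (p↾(r+1)) ⊆ W (a ⌢ p |a|)` yet contains a nonempty sibling
  by_contra! hle
  obtain ⟨z, hz⟩ := hS.nonempty (a ++ [max k (p a.length + 1)])
  have hzr : z ∈ W (pre p (r + 1)) :=
    (hsub (mem_iUnion₂.2 ⟨_, le_max_left _ _, hz⟩)).2
  have hz' : z ∈ W (a ++ [p a.length]) := by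
    rw [ha, length_pre, ← pre_succ]
    exact hP.1.antitone_pre p (by omega) hzr
  exact (hP.2 a _ _ (by omega)).subset ⟨hz, hz'⟩

lemma ArrowPt.image [tX : TopologicalSpace X] [tY : TopologicalSpace Y] {W : List ℕ → Set Y}
    {p : ℕ → ℕ} {y : Y} (h : ArrowPt tY W p y) {f : Y → X} (hf : Continuous f) :
    ArrowPt tX (fun a => f '' W a) p (f y) := by
  intro U hU hyU
  obtain ⟨L, hL, hshoot⟩ := h (f ⁻¹' U) (hf.isOpen_preimage U hU) hyU
  refine ⟨L, hL, fun n hn => ?_⟩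
  obtain ⟨_, ⟨k, rfl⟩, hk⟩ := hshoot n hn
  exact ⟨_, ⟨k, rfl⟩, by rw [shootSet_image]; exact image_subset_iff.2 hk⟩

theorem LusinPiBase.alphaScheme_image [tX : TopologicalSpace X] [tY : TopologicalSpace Y]
    {W : List ℕ → Set Y} (hL : LusinPiBase tY W) {f : Y → X} (hf : Continuous f)
    (hfo : IsOpenMap f) (hfs : Function.Surjective f) : AlphaScheme tX fun a => f '' W a := by
  have hcov : Covers W univ := hL.2.1.1
  have hbranch (p : ℕ → ℕ) : ∃ y ∈ fruit W p, ArrowPt tY W p y :=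
    let ⟨y, hy⟩ := hL.2.2.1 p
    ⟨y, hy ▸ rfl, hL.arrowPt (hy ▸ rfl)⟩
  refine ⟨fun a => hfo _ (hL.1 a), fun p => ?_, ⟨?_, fun a => ?_⟩, ?_, fun p => ?_⟩
  · obtain ⟨y, hy, -⟩ := hbranch p
    exact ⟨f y, image_fruit_subset f W p (mem_image_of_mem f hy)⟩
  · simp [hcov.1, hfs.range_eq]
  · simp [← image_iUnion, ← hcov.2 a]
  · rintro a _ ⟨y, hy, rfl⟩
    obtain ⟨q, hq, hyq⟩ := hcov.exists_mem_fruit hy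
    exact ⟨q, hq, image_fruit_subset f W q (mem_image_of_mem f hyq),
      (hL.arrowPt hyq).image hf⟩
  · obtain ⟨y, hy, harrow⟩ := hbranch p
    exact ⟨f y, image_fruit_subset f W p (mem_image_of_mem f hy), harrow.image hf⟩

end forward

section baire

variable {X Y : Type*}

lemma isOpen_stdS (a : List ℕ) : IsOpen (stdS a) := by
  refine isOpen_iff_mem_nhds.2 fun p hp => ?_
  have hcyl : stdS a = cylinder p a.length := ext fun q => isPre_iff_mem_cylinder hp
  exact hcyl ▸ (isOpen_cylinder _ p a.length).mem_nhds (self_mem_cylinder p _)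

lemma stdS_partitions : Partitions stdS univ := by
  refine ⟨⟨eq_univ_of_forall fun p => rfl, fun a => ext fun p => ?_⟩, fun a n m hnm => ?_⟩
  · simp only [stdS, mem_iUnion, mem_ofPred_eq, isPre_append_singleton_iff, exists_eq_right']
  · exact eq_empty_of_forall_notMem fun p ⟨hn, hm⟩ =>
      hnm ((isPre_append_singleton_iff.1 hn).2.symm.trans (isPre_append_singleton_iff.1 hm).2)

lemma stdS_strictBranches : StrictBranches stdS := fun q =>
  ⟨q, ext fun p => ⟨fun hp => eq_of_forall_pre_eq fun n =>
      pre_eq_pre_iff.2 (isPre_pre_iff.1 (mem_iInter.1 hp n)),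
    fun hp => mem_iInter.2 fun n => hp ▸ isPre_pre p n⟩⟩

lemma fruit_preimage (e : Y → X) (V : List ℕ → Set X) (p : ℕ → ℕ) :
    fruit (fun a => e ⁻¹' V a) p = e ⁻¹' fruit V p :=
  (preimage_iInter).symm

lemma Partitions.preimage {V : List ℕ → Set X} (hV : Partitions V univ) (e : Y → X) :
    Partitions (fun a => e ⁻¹' V a) univ := by
  refine ⟨⟨by simp [hV.1.1], fun a => ?_⟩, fun a n m hnm => ?_⟩
  · simp only [← preimage_iUnion, ← hV.1.2 a]
  · simp only [← preimage_inter, hV.2 a n m hnm, preimage_empty]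

lemma StrictBranches.preimage {V : List ℕ → Set X} (hV : StrictBranches V) (e : Y ≃ X) :
    StrictBranches fun a => e ⁻¹' V a := fun q =>
  let ⟨x, hx⟩ := hV q
  ⟨e.symm x, by rw [fruit_preimage, hx, ← e.image_symm_eq_preimage, image_singleton]⟩

lemma nhds_hasBasis_cylinder (p : ℕ → ℕ) : (𝓝 p).HasBasis (fun _ => True) (cylinder p) :=
  (isTopologicalBasis_cylinders fun _ => ℕ).nhds_hasBasis.to_hasBasis
    (fun _ ⟨⟨_, n, hs⟩, hp⟩ => ⟨n, trivial, (hs ▸ mem_cylinder_iff_eq.1 (hs ▸ hp)).le⟩)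
    (fun n _ => ⟨cylinder p n, ⟨⟨p, n, rfl⟩, self_mem_cylinder p n⟩, subset_rfl⟩)

end baire

section selector

variable {X : Type*}

def evens (p : ℕ → ℕ) (k : ℕ) : ℕ := p (2 * k)

def odds (p : ℕ → ℕ) (k : ℕ) : ℕ := p (2 * k + 1)

def interleave (q r : ℕ → ℕ) (n : ℕ) : ℕ := if n % 2 = 0 then q (n / 2) else r (n / 2)

@[simp] lemma evens_interleave (q r : ℕ → ℕ) : evens (interleave q r) = q :=
  funext fun k => by simp [evens, interleave]

@[simp] lemma odds_interleave (q r : ℕ → ℕ) : odds (interleave q r) = r :=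
  funext fun k => by simp [odds, interleave, Nat.add_mod, Nat.add_div]

lemma interleave_mem_cylinder {y q r : ℕ → ℕ} {n : ℕ} (hq : q ∈ cylinder (evens y) n)
    (hr : r ∈ cylinder (odds y) n) : interleave q r ∈ cylinder y (2 * n) := by
  refine mem_cylinder_iff.2 fun i hi => ?_
  rcases Nat.even_or_odd' i with ⟨k, rfl | rfl⟩
  · simpa [interleave, evens] using mem_cylinder_iff.1 hq k (by omega)
  · simpa [interleave, odds, Nat.add_mod, Nat.add_div] using mem_cylinder_iff.1 hr k (by omega)

lemma pre_evens_succ {y r : ℕ → ℕ} {m : ℕ} (hr : r ∈ cylinder y (2 * m)) :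
    pre (evens r) (m + 1) = pre (evens y) m ++ [r (2 * m)] := by
  have hevens : evens r ∈ cylinder (evens y) m :=
    mem_cylinder_iff.2 fun k hk => mem_cylinder_iff.1 hr _ (by omega)
  rw [pre_succ, pre_eq_pre_iff.2 hevens]
  rfl

def prefixCode (ι : X → ℕ → ℕ) (x : X) (k : ℕ) : ℕ := Encodable.encode (pre (ι x) k)

lemma eq_of_prefixCode_eventuallyEq {ι : X → ℕ → ℕ} (hι : Function.Injective ι) {x x' : X}
    (h : prefixCode ι x =ᶠ[atTop] prefixCode ι x') : x = x' := by
  refine hι (funext fun i => ?_)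
  obtain ⟨k, hk, hik⟩ := (h.and (eventually_ge_atTop (i + 1))).exists
  exact mem_cylinder_iff.1 (pre_eq_pre_iff.1 (Encodable.encode_injective hk)) i (by omega)

def Tags (t : TopologicalSpace X) (V : List ℕ → Set X) (ι : X → ℕ → ℕ) (p : ℕ → ℕ) (x : X) :
    Prop :=
  x ∈ fruit V (evens p) ∧ ArrowPt t V (evens p) x ∧ odds p =ᶠ[atTop] prefixCode ι x

variable {t : TopologicalSpace X} {V : List ℕ → Set X}

lemma AlphaScheme.exists_selector (hV : AlphaScheme t V) {ι : X → ℕ → ℕ}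
    (hι : Function.Injective ι) :
    ∃ g : (ℕ → ℕ) → X, (∀ p, g p ∈ fruit V (evens p) ∧ ArrowPt t V (evens p) (g p)) ∧
      ∀ p x, Tags t V ι p x → g p = x := by
  have (p : ℕ → ℕ) : ∃ x, (x ∈ fruit V (evens p) ∧ ArrowPt t V (evens p) x) ∧
      ∀ x', Tags t V ι p x' → x = x' := by
    by_cases h : ∃ x, Tags t V ι p x
    · obtain ⟨x, hx⟩ := h
      exact ⟨x, ⟨hx.1, hx.2.1⟩, fun x' hx' =>
        eq_of_prefixCode_eventuallyEq hι (hx.2.2.symm.trans hx'.2.2)⟩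
    · obtain ⟨x, hx, harrow⟩ := hV.2.2.2.2 (evens p)
      exact ⟨x, ⟨hx, harrow⟩, fun x' hx' => (h ⟨x', hx'⟩).elim⟩
  choose g hg using this
  exact ⟨g, fun p => (hg p).1, fun p x hx => (hg p).2 x hx⟩

lemma AlphaScheme.exists_tags_mem_cylinder (hV : AlphaScheme t V) (ι : X → ℕ → ℕ)
    (y : ℕ → ℕ) (n : ℕ) {x : X} (hx : x ∈ V (pre (evens y) n)) :
    ∃ p ∈ cylinder y (2 * n), Tags t V ι p x := by
  obtain ⟨q, hq, hxq, harrow⟩ := hV.2.2.2.1 _ x hx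
  let r : ℕ → ℕ := fun k => if k < n then odds y k else prefixCode ι x k
  refine ⟨interleave q r, interleave_mem_cylinder ?_ ?_, ?_⟩
  · exact isPre_pre_iff.1 hq
  · exact mem_cylinder_iff.2 fun k hk => if_pos hk
  · simp only [Tags, evens_interleave, odds_interleave]
    exact ⟨hxq, harrow, eventually_atTop.2 ⟨n, fun k hk => if_neg (by omega)⟩⟩

end selector

section inducing

variable {X Y : Type*} [tX : TopologicalSpace X] [tY : TopologicalSpace Y] {V : List ℕ → Set X}
  {g : (ℕ → ℕ) → X} {e : Y ≃ (ℕ → ℕ)}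

lemma nhds_hasBasis_of_isInducing (he : IsInducing fun y => (g (e y), e y)) (y : Y) :
    (𝓝 y).HasBasis (fun i : Set X × ℕ => (g (e y) ∈ i.1 ∧ IsOpen i.1) ∧ True)
      fun i => {z | g (e z) ∈ i.1 ∧ e z ∈ cylinder (e y) i.2} := by
  rw [he.nhds_eq_comap, nhds_prod_eq]
  exact ((nhds_basis_opens _).prod (nhds_hasBasis_cylinder (e y))).comap _

lemma isOpenMap_of_isInducing (he : IsInducing fun y => (g (e y), e y)) (hV : OpenScheme tX V)
    (hg : ∀ p, g p ∈ fruit V (evens p))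
    (hcyl : ∀ y n, ∀ x ∈ V (pre (evens y) n), ∃ p ∈ cylinder y (2 * n), g p = x) :
    IsOpenMap (g ∘ e) := by
  refine IsOpenMap.of_nhds_le fun y =>
    ((nhds_hasBasis_of_isInducing he y).map _).ge_iff.2 fun ⟨O, n⟩ ⟨⟨hyO, hO⟩, _⟩ => ?_
  have hy : g (e y) ∈ V (pre (evens (e y)) n) := mem_iInter.1 (hg (e y)) n
  refine mem_of_superset ((hO.inter (hV _)).mem_nhds ⟨hyO, hy⟩) fun x ⟨hxO, hx⟩ => ?_
  obtain ⟨p, hp, rfl⟩ := hcyl (e y) n x hx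
  exact ⟨e.symm p, by simpa [hxO] using cylinder_anti _ (by omega) hp, by simp⟩

lemma lusinPiBase_of_isInducing (he : IsInducing fun y => (g (e y), e y))
    (hg : ∀ p, g p ∈ fruit V (evens p) ∧ ArrowPt tX V (evens p) (g p)) :
    LusinPiBase tY fun a => e ⁻¹' stdS a := by
  refine ⟨fun a => (isOpen_stdS a).preimage (continuous_snd.comp he.continuous),
    stdS_partitions.preimage e, stdS_strictBranches.preimage e, fun y U hU hyU => ?_⟩
  obtain ⟨⟨O, n⟩, ⟨⟨hyO, hO⟩, -⟩, hsub⟩ :=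
    (nhds_hasBasis_of_isInducing he y).mem_iff.1 (IsOpen.mem_nhds hU hyU)
  obtain ⟨L, hL, hshoot⟩ := (hg (e y)).2 O hO hyO
  obtain ⟨m, hmL, hnm⟩ := hL.exists_gt n
  obtain ⟨_, ⟨k, rfl⟩, hk⟩ := hshoot m hmL
  refine ⟨pre (e y) (2 * m), k, isPre_pre _ _, fun z hz => hsub ?_⟩
  obtain ⟨j, hj, hzj⟩ := mem_iUnion₂.1 hz
  obtain ⟨hzy, hzj⟩ := isPre_append_singleton_iff.1 hzj
  have hzy' : e z ∈ cylinder (e y) (2 * m) := isPre_pre_iff.1 hzy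
  refine ⟨hk (mem_iUnion₂.2 ⟨j, hj, ?_⟩), cylinder_anti _ (by omega) hzy'⟩
  have hz := mem_iInter.1 (hg (e z)).1 (m + 1)
  rw [length_pre] at hzj
  rwa [pre_evens_succ hzy', hzj] at hz

end inducing

theorem AlphaScheme.exists_lusinPiBase_image {X : Type u} [tX : TopologicalSpace X]
    {V : List ℕ → Set X} (hV : AlphaScheme tX V) (hX : Cardinal.mk X ≤ Cardinal.continuum) :
    ∃ (Y : Type u) (tY : TopologicalSpace Y) (f : Y → X),
      (∃ W : List ℕ → Set Y, LusinPiBase tY W) ∧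
      @Continuous Y X tY tX f ∧ @IsOpenMap Y X tY tX f ∧ Function.Surjective f := by
  obtain ⟨ι⟩ : Nonempty (X ↪ (ℕ → ℕ)) := Cardinal.lift_mk_le'.1 (by simpa using hX)
  obtain ⟨g, hg, hgtags⟩ := hV.exists_selector ι.injective
  have hcyl (y : ℕ → ℕ) (n : ℕ) (x : X) (hx : x ∈ V (pre (evens y) n)) :
      ∃ p ∈ cylinder y (2 * n), g p = x :=
    let ⟨p, hp, hpx⟩ := hV.exists_tags_mem_cylinder ι y n hx
    ⟨p, hp, hgtags p x hpx⟩
  let e : ULift.{u} (ℕ → ℕ) ≃ (ℕ → ℕ) := Equiv.ulift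
  let tY : TopologicalSpace (ULift.{u} (ℕ → ℕ)) := .induced (fun y => (g (e y), e y)) inferInstance
  have he : @IsInducing _ _ tY _ fun y => (g (e y), e y) := ⟨rfl⟩
  refine ⟨ULift.{u} (ℕ → ℕ), tY, g ∘ e, ⟨_, lusinPiBase_of_isInducing he hg⟩,
    continuous_fst.comp he.continuous, isOpenMap_of_isInducing he hV.1 (fun p => (hg p).1) hcyl,
    fun x => ?_⟩
  obtain ⟨p, -, hpx⟩ := hcyl (fun _ => 0) 0 x (by simp [pre, hV.2.2.1.1])
  exact ⟨e.symm p, by simpa using hpx⟩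

/-- A space `X` is a continuous open image of a space possessing a Lusin π-base
iff `X` has an α-scheme and `|X| ≤ 𝔠`. -/
theorem statement0 {X : Type u} [tX : TopologicalSpace X] :
    (∃ (Y : Type u) (tY : TopologicalSpace Y) (f : Y → X),
        (∃ W : List ℕ → Set Y, LusinPiBase tY W) ∧
        @Continuous Y X tY tX f ∧ @IsOpenMap Y X tY tX f ∧ Function.Surjective f) ↔
      ((∃ V : List ℕ → Set X, AlphaScheme tX V) ∧ Cardinal.mk X ≤ Cardinal.continuum) := by
  constructor
  · rintro ⟨Y, tY, f, ⟨W, hW⟩, hf, hfo, hfs⟩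
    exact ⟨⟨_, hW.alphaScheme_image hf hfo hfs⟩,
      (Cardinal.mk_le_of_surjective hfs).trans (hW.2.2.1.mk_le_continuum hW.2.1.1)⟩
  · rintro ⟨⟨V, hV⟩, hX⟩
    exact hV.exists_lusinPiBase_image hX
end

section
/- If W = ⟨W_a⟩ is an α-scheme for a topological space (X,τ), then W is a π-base Souslin scheme on (X,τ); that is, W is open and for every a ∈ ω^{<ω} the family {W_b : a ⊑ b} is a π-net for the subspace W_a of X. -/
open Set Topology

universe u v

/-- Every α-scheme for `(X,τ)` is a π-base Souslin scheme on `(X,τ)`. -/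
theorem statement6 {X : Type*} [tX : TopologicalSpace X] (W : List ℕ → Set X)
    (hW : AlphaScheme tX W) :
    PiBaseScheme tX W := by
  obtain ⟨hopen, hcomp, hcov, hS1, _hS2⟩ := hW
  -- regularity from covering
  have hreg : ∀ a n, W (a ++ [n]) ⊆ W a := by
    intro a n
    rw [hcov.2 a]
    exact subset_iUnion (fun n => W (a ++ [n])) n
  have hpre : ∀ a b : List ℕ, a <+: b → W b ⊆ W a := by
    rintro a b ⟨t, rfl⟩
    induction t using List.reverseRecOn with
    | nil => simp
    | append_singleton s n ih =>
        calc W (a ++ (s ++ [n])) = W ((a ++ s) ++ [n]) := by rw [List.append_assoc]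
        _ ⊆ W (a ++ s) := hreg _ _
        _ ⊆ W a := ih
  -- pre p (n+1) = pre p n ++ [p n]
  have hpre_succ : ∀ (p : ℕ → ℕ) n, pre p (n + 1) = pre p n ++ [p n] := by
    intro p n
    simp only [pre, List.ofFn_succ', List.concat_eq_append]
    rfl
  have hpre_mono : ∀ (p : ℕ → ℕ) (m n : ℕ), m ≤ n → pre p m <+: pre p n := by
    intro p m n hmn
    induction n with
    | zero => simp [Nat.le_zero.mp hmn]
    | succ k ih =>
        rcases Nat.lt_or_ge m (k + 1) with h | h
        · exact (ih (Nat.lt_succ_iff.mp h)).trans ⟨[p k], (hpre_succ p k).symm⟩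
        · have : m = k + 1 := le_antisymm hmn h
          simp [this]
  -- nonemptiness of each W b
  have hne : ∀ b : List ℕ, (W b).Nonempty := by
    intro b
    set q : ℕ → ℕ := fun i => if h : i < b.length then b.get ⟨i, h⟩ else 0 with hq
    have hqb : pre q b.length = b := by
      apply List.ext_get
      · simp [pre]
      · intro i h1 h2
        simp [pre, hq]
    obtain ⟨x, hx⟩ := hcomp q
    refine ⟨x, ?_⟩
    have := mem_iInter.mp hx b.length
    rwa [hqb] at this
  refine ⟨hopen, fun a => ⟨?_, ?_⟩⟩
  · rintro G ⟨b, hb, rfl⟩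
    exact hne b
  · rintro U hU ⟨x, hxU, hxa⟩
    obtain ⟨p, hap, hxf, harr⟩ := hS1 a x hxa
    obtain ⟨L, hLinf, hL⟩ := harr U hU hxU
    obtain ⟨n, hnL, hna⟩ := hLinf.exists_gt a.length
    obtain ⟨G, ⟨k, rfl⟩, hGU⟩ := hL n hnL
    refine ⟨W (pre p n ++ [k]), ⟨pre p n ++ [k], ?_, rfl⟩, ?_⟩
    · -- a is a prefix of pre p n ++ [k]
      have : a <+: pre p n := by
        have := hpre_mono p a.length n (le_of_lt hna)
        rwa [← hap] at this
      exact this.trans (List.prefix_append _ _)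
    · refine subset_inter ?_ ?_
      · refine subset_trans ?_ hGU
        intro y hy
        exact mem_iUnion.mpr ⟨k, mem_iUnion.mpr ⟨le_refl k, hy⟩⟩
      · refine subset_trans (hreg _ _) ?_
        apply hpre
        have := hpre_mono p a.length n (le_of_lt hna)
        rwa [← hap] at this
end

section
/- If a topological space (X,τ) has an α-scheme, then it has a ramose α-scheme. -/
open Set Topology

universe u v

namespace S7

def psi (b : List ℕ) : List ℕ := List.ofFn (fun i : Fin ((b.length + 1) / 2) => b.getD (2 * i) 0)

lemma pre_length (p : ℕ → ℕ) (n : ℕ) : (pre p n).length = n := by simp [pre]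

lemma pre_getElem (p : ℕ → ℕ) (n i : ℕ) (h : i < (pre p n).length) : (pre p n)[i] = p i := by
  simp [pre]

lemma psi_length (b : List ℕ) : (psi b).length = (b.length + 1) / 2 := by simp [psi]

lemma psi_getElem (b : List ℕ) (i : ℕ) (h : i < (psi b).length) : (psi b)[i] = b.getD (2*i) 0 := by
  simp [psi]

lemma isPre_iff (a : List ℕ) (p : ℕ → ℕ) :
    IsPre a p ↔ ∀ i (h : i < a.length), a[i] = p i := by
  constructor
  · intro h i hi
    rw [List.getElem_of_eq h hi, pre_getElem]
  · intro h
    refine List.ext_getElem (by simp [pre]) fun i h1 h2 => ?_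
    rw [h i h1, pre_getElem]

lemma psi_pre (p q : ℕ → ℕ) (hq : ∀ k, p (2*k) = q k) (n : ℕ) :
    psi (pre p n) = pre q ((n+1)/2) := by
  refine List.ext_getElem (by simp [psi_length, pre_length]) fun i h1 h2 => ?_
  rw [psi_getElem _ _ h1, pre_getElem]
  have hi : i < (n+1)/2 := by simpa [psi_length, pre_length] using h1
  have h2i : 2*i < n := by omega
  rw [List.getD_eq_getElem _ _ (by simpa [pre_length] using h2i), pre_getElem, hq]

lemma psi_append_even (b : List ℕ) (m : ℕ) (hb : b.length = 2*m) (j : ℕ) :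
    psi (b ++ [j]) = psi b ++ [j] := by
  refine List.ext_getElem (by simp [psi_length, hb]; omega) fun i h1 h2 => ?_
  rw [psi_getElem _ _ h1]
  have hi : i < m + 1 := by simp [psi_length, hb] at h1; omega
  rcases Nat.lt_or_ge i m with hlt | hge
  · have hib : 2*i < b.length := by omega
    rw [List.getD_eq_getElem _ _ (by simp; omega), List.getElem_append_left hib,
      List.getElem_append_left (by simp [psi_length, hb]; omega),
      psi_getElem _ _ (by simp [psi_length, hb]; omega),
      List.getD_eq_getElem _ _ hib]
  · have him : i = m := by omega
    subst him
    have : (b ++ [j]).getD (2*i) 0 = j := by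
      rw [List.getD_eq_getElem _ _ (by simp [hb])]
      rw [List.getElem_append_right (by omega)]
      simp [hb]
    rw [this, List.getElem_append_right (by simp [psi_length, hb]; omega)]
    simp [psi_length, hb]

lemma psi_append_odd (b : List ℕ) (m : ℕ) (hb : b.length = 2*m+1) (j : ℕ) :
    psi (b ++ [j]) = psi b := by
  refine List.ext_getElem (by simp [psi_length, hb]; omega) fun i h1 h2 => ?_
  rw [psi_getElem _ _ h1, psi_getElem _ _ h2]
  have hi : i < m + 1 := by simp [psi_length, hb] at h1; omega
  have h2i : 2*i < b.length := by omega
  rw [List.getD_eq_getElem _ _ (by simp; omega), List.getD_eq_getElem _ _ h2i,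
    List.getElem_append_left h2i]

end S7

namespace S7

variable {X : Type*}

lemma fruit_psi (V : List ℕ → Set X) (p q : ℕ → ℕ) (hq : ∀ k, p (2*k) = q k) :
    fruit (fun a => V (psi a)) p = fruit V q := by
  unfold fruit
  apply subset_antisymm
  · refine Set.subset_iInter fun m => ?_
    have h : psi (pre p (2*m)) = pre q m := by
      rw [psi_pre p q hq]; congr 1; omega
    refine (Set.iInter_subset _ (2*m)).trans ?_
    show V (psi (pre p (2*m))) ⊆ V (pre q m)
    rw [h]
  · refine Set.subset_iInter fun n => ?_
    show (⋂ n, V (pre q n)) ⊆ V (psi (pre p n))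
    rw [psi_pre p q hq]
    exact Set.iInter_subset _ _

lemma shootSet_psi (V : List ℕ → Set X) (b : List ℕ) (m : ℕ) (hb : b.length = 2*m) (k : ℕ) :
    shootSet (fun a => V (psi a)) b k = shootSet V (psi b) k := by
  unfold shootSet
  exact Set.iUnion_congr fun j => Set.iUnion_congr fun _ => by
      show V (psi (b ++ [j])) = V (psi b ++ [j])
      rw [psi_append_even b m hb]

lemma arrowPt_psi (t : TopologicalSpace X) (V : List ℕ → Set X) (p q : ℕ → ℕ)
    (hq : ∀ k, p (2*k) = q k) (x : X) (h : ArrowPt t V q x) :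
    ArrowPt t (fun a => V (psi a)) p x := by
  intro U hU hx
  obtain ⟨L, hL, hsh⟩ := h U hU hx
  refine ⟨(2*·) '' L, hL.image (fun a _ b _ hab => by simpa using hab), ?_⟩
  rintro n ⟨m, hm, rfl⟩
  obtain ⟨G, ⟨k, rfl⟩, hG⟩ := hsh m hm
  refine ⟨shootSet (fun a => V (psi a)) (pre p (2*m)) k, ⟨k, rfl⟩, ?_⟩
  rw [shootSet_psi V _ m (by simp [pre_length]) k, psi_pre p q hq]
  have hm' : (2*m+1)/2 = m := by omega
  rwa [hm']

lemma mk_baire : Cardinal.mk (ℕ → ℕ) = Cardinal.continuum := by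
  rw [← Cardinal.power_def, Cardinal.mk_nat, Cardinal.aleph0_power_aleph0]

end S7


/-- If a space has an α-scheme, then it has a ramose α-scheme. -/
theorem statement7 {X : Type*} [tX : TopologicalSpace X]
    (h : ∃ V : List ℕ → Set X, AlphaScheme tX V) :
    ∃ V : List ℕ → Set X, RamoseAlphaScheme tX V := by
  classical
  obtain ⟨V, hOpen, hComp, hCov, hS1, hS2⟩ := h
  have key : ∀ a : List ℕ, ∀ x ∈ V (S7.psi a), ∃ F : (ℕ → ℕ) → (ℕ → ℕ),
      Function.Injective F ∧ ∀ z, IsPre a (F z) ∧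
        x ∈ fruit (fun b => V (S7.psi b)) (F z) ∧
        ArrowPt tX (fun b => V (S7.psi b)) (F z) x := by
    intro a x hx
    obtain ⟨q, hq1, hq2, hq3⟩ := hS1 (S7.psi a) x hx
    set F : (ℕ → ℕ) → (ℕ → ℕ) := fun z i =>
      if h : i < a.length then a[i] else if i % 2 = 0 then q (i/2)
      else if 2*a.length+1 ≤ i then z ((i - (2*a.length+1))/2) else 0 with hF
    have hqk : ∀ z k, F z (2*k) = q k := by
      intro z k
      by_cases hlt : 2*k < a.length
      · have hk : (S7.psi a)[k]'(by simp [S7.psi_length]; omega) = q k :=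
          (S7.isPre_iff _ _).1 hq1 k (by simp [S7.psi_length]; omega)
        rw [S7.psi_getElem _ _ (by simp [S7.psi_length]; omega),
          List.getD_eq_getElem _ _ hlt] at hk
        simp only [hF, dif_pos hlt]
        exact hk
      · simp only [hF, dif_neg hlt]
        rw [if_pos (by omega)]
        congr 1; omega
    have e : ∀ (z : ℕ → ℕ) (k : ℕ), F z (2*a.length+1+2*k) = z k := by
      intro z k
      simp only [hF]
      rw [dif_neg (by omega), if_neg (by omega), if_pos (by omega)]
      congr 1; omega
    refine ⟨F, ?_, fun z => ⟨?_, ?_, ?_⟩⟩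
    · intro z1 z2 hz
      funext k
      have h1 := congrFun hz (2*a.length+1+2*k)
      rwa [e z1, e z2] at h1
    · rw [S7.isPre_iff]
      intro i hi
      simp only [hF, dif_pos hi]
    · rw [S7.fruit_psi V (F z) q (hqk z)]
      exact hq2
    · exact S7.arrowPt_psi tX V (F z) q (hqk z) x hq3
  refine ⟨fun a => V (S7.psi a), ⟨fun a => hOpen _, ?_, ⟨?_, ?_⟩, ?_, ?_⟩, ?_⟩
  · intro p
    rw [S7.fruit_psi V p (fun k => p (2*k)) (fun k => rfl)]
    exact hComp _
  · have hnil : S7.psi [] = [] := by simp [S7.psi]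
    show V (S7.psi []) = univ
    rw [hnil]
    exact hCov.1
  · intro a
    show V (S7.psi a) = ⋃ n, V (S7.psi (a ++ [n]))
    rcases Nat.even_or_odd a.length with ⟨m, hm⟩ | ⟨m, hm⟩
    · calc V (S7.psi a) = ⋃ n, V (S7.psi a ++ [n]) := hCov.2 (S7.psi a)
        _ = ⋃ n, V (S7.psi (a ++ [n])) :=
            Set.iUnion_congr fun n => by rw [S7.psi_append_even a m (by omega) n]
    · have he : ∀ n, S7.psi (a ++ [n]) = S7.psi a :=
        fun n => S7.psi_append_odd a m (by omega) n
      rw [show (⋃ n, V (S7.psi (a ++ [n]))) = ⋃ _ : ℕ, V (S7.psi a) from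
        Set.iUnion_congr fun n => by rw [he n], Set.iUnion_const]
  · intro a x hx
    obtain ⟨F, _, hprop⟩ := key a x hx
    exact ⟨F (fun _ => 0), hprop _⟩
  · intro p
    obtain ⟨x, hx, hax⟩ := hS2 (fun k => p (2*k))
    refine ⟨x, ?_, S7.arrowPt_psi tX V p _ (fun k => rfl) x hax⟩
    rw [S7.fruit_psi V p _ (fun k => rfl)]
    exact hx
  · intro a x hx
    obtain ⟨F, hinj, hprop⟩ := key a x hx
    refine le_antisymm ?_ ?_
    · rw [← S7.mk_baire]
      exact Cardinal.mk_subtype_le _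
    · rw [← S7.mk_baire]
      exact Cardinal.mk_le_of_injective
        (f := fun z => (⟨F z, hprop z⟩ : {p : ℕ → ℕ // IsPre a p ∧
          x ∈ fruit (fun b => V (S7.psi b)) p ∧ ArrowPt tX (fun b => V (S7.psi b)) p x}))
        (fun z1 z2 hz => hinj (congrArg Subtype.val hz))
end

section
/- If ⟨V_a⟩ is a Lusin π-base for a topological space X, then the family {V_a : a ∈ ω^{<ω}} is a π-base for X; consequently, every topological space possessing a Lusin π-base is a π-space. -/
open Set Topology

universe u v

/-- If `⟨V_a⟩` is a Lusin π-base for `X`, then `{V_a : a ∈ ω^{<ω}}` is a π-base for `X`;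
consequently, every space with a Lusin π-base is a π-space. -/
theorem statement16 {X : Type*} [tX : TopologicalSpace X] (V : List ℕ → Set X)
    (hV : LusinPiBase tX V) :
    PiBase tX {S | ∃ a : List ℕ, S = V a} ∧ PiSpace tX := by
  obtain ⟨hOpen, hPart, hStrict, hL6⟩ := hV
  have hne : ∀ a, (V a).Nonempty := by
    intro a
    set q : ℕ → ℕ := fun i => a.getD i 0 with hq
    have hpre : pre q a.length = a := by
      apply List.ext_getElem
      · simp [pre]
      · intro i h1 h2
        simp [pre, hq, List.getD_eq_getElem a 0 h2]
    obtain ⟨x, hx⟩ := hStrict q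
    have hxm : x ∈ fruit V q := by rw [hx]; exact rfl
    have := Set.mem_iInter.mp hxm a.length
    rw [hpre] at this
    exact ⟨x, this⟩
  have hpb : PiBase tX {S | ∃ a : List ℕ, S = V a} := by
    constructor
    · rintro G ⟨a, rfl⟩
      exact ⟨hne a, hOpen a⟩
    · rintro U hU ⟨x, hx⟩
      obtain ⟨a, n, hxa, hsub⟩ := hL6 x U hU hx
      refine ⟨V (a ++ [n]), ⟨a ++ [n], rfl⟩, fun y hy => hsub ?_⟩
      exact Set.mem_iUnion.mpr ⟨n, Set.mem_iUnion.mpr ⟨le_refl n, hy⟩⟩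
  exact ⟨hpb, V, hOpen, hPart, hStrict, hpb⟩
end
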